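/- Let V be an (MN)×(MN) unitary matrix, indexed by pairs ((i,k),(j,l)) with i,j ∈ {1,…,M} and k,l ∈ {1,…,N}, and let Ṽ be its realignment, the M²×N² matrix with entries Ṽ_{(i,j),(k,l)} = V_{(i,k),(j,l)}. Then rank(Ṽ) = 1 if and only if there exist an M×M matrix U1, an N×N matrix U2 and a real number k > 0 such that V = U1⊗U2 (Kronecker product), U1·U1† = U1†·U1 = k⁻¹·I_M and U2·U2† = U2†·U2 = k·I_N. In particular, if V is a unitary tensor decomposable matrix then rank(Ṽ) = 1. -/

import Mathlib

open Matrix Kronecker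

/-- The realignment `Ṽ` of a matrix `V` on `ℂᴹ ⊗ ℂᴺ`: the `M²×N²` matrix with
entries `Ṽ_{(i,j),(k,l)} = V_{(i,k),(j,l)}`. -/
def realign (M N : ℕ) (V : Matrix (Fin M × Fin N) (Fin M × Fin N) ℂ) :
    Matrix (Fin M × Fin M) (Fin N × Fin N) ℂ :=
  Matrix.of fun p q => V (p.1, q.1) (p.2, q.2)

/-!
The realignment of `A ⊗ B` is the outer product of the entry vectors of `A` and `B`, so `Ṽ` has
rank one exactly when `V = A ⊗ B` with `A, B ≠ 0`. For such a unitary `V`,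
`(A A†) ⊗ (B B†) = V V† = 1` forces `A A† = a • 1` and `B B† = a⁻¹ • 1`; the scalar `a` is a
positive real because `A A†` is positive semidefinite, and `A† A = a • 1` because `a⁻¹ • A†` is
then a right, hence two-sided, inverse of `A`.
-/

namespace Matrix

section Field

variable {K m n : Type*} [Field K]

theorem rank_eq_zero_iff [Fintype n] {A : Matrix m n K} : A.rank = 0 ↔ A = 0 := by
  classical
  rw [rank, Submodule.finrank_eq_zero, LinearMap.range_eq_bot, ← toLin'_apply',
    LinearEquiv.map_eq_zero_iff]

theorem rank_vecMulVec_eq_one [Fintype n] {x : m → K} {y : n → K} (hx : x ≠ 0) (hy : y ≠ 0) :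
    (vecMulVec x y).rank = 1 := by
  obtain ⟨i, hi⟩ := Function.ne_iff.mp hx
  obtain ⟨j, hj⟩ := Function.ne_iff.mp hy
  have hne : (vecMulVec x y).rank ≠ 0 :=
    rank_eq_zero_iff.not.mpr fun h => mul_ne_zero hi hj congr($h i j)
  have hle := rank_vecMulVec_le x y
  omega

theorem exists_vecMulVec_of_rank_eq_one [Fintype n] {A : Matrix m n K} (hA : A.rank = 1) :
    ∃ x y, A = vecMulVec x y := by
  rw [rank_eq_finrank_span_cols, finrank_eq_one_iff'] at hA
  obtain ⟨v, -, hv⟩ := hA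
  choose c hc using fun j => hv ⟨Aᵀ j, Submodule.subset_span ⟨j, rfl⟩⟩
  refine ⟨v, c, ext fun i j => ?_⟩
  simpa [vecMulVec_apply, mul_comm] using (congr_fun (congrArg Subtype.val (hc j)) i).symm

theorem ne_zero_of_mul_eq_smul_one [Fintype n] [DecidableEq m] [Nonempty m]
    {A : Matrix m n K} {B : Matrix n m K} {c : K} (hc : c ≠ 0) (h : A * B = c • 1) : A ≠ 0 := by
  rintro rfl
  obtain ⟨i⟩ := ‹Nonempty m›
  exact hc (by simpa using congr($h i i).symm)

theorem mul_eq_smul_one_comm [Fintype m] [DecidableEq m] {A B : Matrix m m K} {c : K}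
    (hc : c ≠ 0) (h : A * B = c • 1) : B * A = c • 1 := by
  have hinv : A * (c⁻¹ • B) = 1 := by
    rw [mul_smul_comm, h, smul_smul, inv_mul_cancel₀ hc, one_smul]
  calc B * A = c • (c⁻¹ • B * A) := by
        rw [smul_mul_assoc, smul_smul, mul_inv_cancel₀ hc, one_smul]
    _ = c • 1 := by rw [mul_eq_one_comm.mp hinv]

theorem exists_smul_one_of_kronecker_eq_one [DecidableEq m] [DecidableEq n]
    [Nonempty m] [Nonempty n] {A : Matrix m m K} {B : Matrix n n K} (h : A ⊗ₖ B = 1) :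
    ∃ a : K, a ≠ 0 ∧ A = a • 1 ∧ B = a⁻¹ • 1 := by
  have hAB (i j k l) : A i j * B k l = if i = j ∧ k = l then 1 else 0 := by
    simpa [one_apply, Prod.ext_iff] using congr($h (i, k) (j, l))
  obtain ⟨i₀⟩ := ‹Nonempty m›
  obtain ⟨k₀⟩ := ‹Nonempty n›
  have h₀ : A i₀ i₀ * B k₀ k₀ = 1 := by simpa using hAB i₀ i₀ k₀ k₀
  have ha : A i₀ i₀ ≠ 0 := left_ne_zero_of_mul_eq_one h₀
  refine ⟨A i₀ i₀, ha, ext fun i j => ?_, ext fun k l => ?_⟩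
  · rw [(eq_mul_inv_iff_mul_eq₀ (right_ne_zero_of_mul_eq_one h₀)).mpr (hAB i j k₀ k₀),
      ← eq_inv_of_mul_eq_one_left h₀]
    simp [one_apply, mul_comm]
  · rw [(eq_inv_mul_iff_mul_eq₀ ha).mpr (hAB i₀ i₀ k l)]
    simp [one_apply]

end Field

section Complex

variable {m n : Type*} [Fintype m] [Fintype n]

theorem ne_zero_of_mem_unitaryGroup [DecidableEq m] [Nonempty m] {W : Matrix m m ℂ}
    (hW : W ∈ unitaryGroup m ℂ) : W ≠ 0 :=
  ne_zero_of_mul_eq_smul_one one_ne_zero ((mem_unitaryGroup_iff.mp hW).trans (one_smul ℂ _).symm)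

open scoped ComplexOrder in
theorem exists_pos_of_mul_conjTranspose_eq_smul_one [DecidableEq m] [Nonempty m]
    {A : Matrix m n ℂ} {c : ℂ} (hc : c ≠ 0) (h : A * Aᴴ = c • 1) :
    ∃ r : ℝ, 0 < r ∧ c = r := by
  obtain ⟨i⟩ := ‹Nonempty m›
  have hnonneg : 0 ≤ c := by
    simpa [h] using (posSemidef_self_mul_conjTranspose A).diag_nonneg (i := i)
  obtain ⟨r, hr, rfl⟩ := RCLike.pos_iff_exists_ofReal.mp (hnonneg.lt_of_ne' hc)
  exact ⟨r, hr, rfl⟩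

theorem exists_pos_of_kronecker_mem_unitaryGroup [DecidableEq m] [DecidableEq n]
    [Nonempty m] [Nonempty n] {A : Matrix m m ℂ} {B : Matrix n n ℂ}
    (h : A ⊗ₖ B ∈ unitaryGroup (m × n) ℂ) :
    ∃ k : ℝ, 0 < k ∧ A * Aᴴ = (k : ℂ)⁻¹ • 1 ∧ Aᴴ * A = (k : ℂ)⁻¹ • 1 ∧
      B * Bᴴ = (k : ℂ) • 1 ∧ Bᴴ * B = (k : ℂ) • 1 := by
  have hAB : (A * Aᴴ) ⊗ₖ (B * Bᴴ) = 1 := by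
    rw [mul_kronecker_mul, ← conjTranspose_kronecker]
    exact mem_unitaryGroup_iff.mp h
  obtain ⟨a, ha, hA, hB⟩ := exists_smul_one_of_kronecker_eq_one hAB
  obtain ⟨r, hr, rfl⟩ := exists_pos_of_mul_conjTranspose_eq_smul_one ha hA
  have hA' : A * Aᴴ = ((r⁻¹ : ℝ) : ℂ)⁻¹ • 1 := by rwa [Complex.ofReal_inv, inv_inv]
  have hB' : B * Bᴴ = ((r⁻¹ : ℝ) : ℂ) • 1 := by rwa [Complex.ofReal_inv]
  exact ⟨r⁻¹, inv_pos.mpr hr, hA', mul_eq_smul_one_comm (by simpa using hr.ne') hA',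
    hB', mul_eq_smul_one_comm (by simpa using hr.ne') hB'⟩

end Complex

end Matrix

section Realign

variable {M N : ℕ}

theorem realign_kronecker (A : Matrix (Fin M) (Fin M) ℂ) (B : Matrix (Fin N) (Fin N) ℂ) :
    realign M N (A ⊗ₖ B) = vecMulVec (Function.uncurry A) (Function.uncurry B) :=
  rfl

theorem rank_realign_kronecker {A : Matrix (Fin M) (Fin M) ℂ} {B : Matrix (Fin N) (Fin N) ℂ}
    (hA : A ≠ 0) (hB : B ≠ 0) : (realign M N (A ⊗ₖ B)).rank = 1 := by
  rw [realign_kronecker]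
  exact rank_vecMulVec_eq_one (fun h => hA (ext fun i j => congr_fun h (i, j)))
    (fun h => hB (ext fun k l => congr_fun h (k, l)))

theorem exists_kronecker_of_rank_realign_eq_one {V : Matrix (Fin M × Fin N) (Fin M × Fin N) ℂ}
    (h : (realign M N V).rank = 1) :
    ∃ (A : Matrix (Fin M) (Fin M) ℂ) (B : Matrix (Fin N) (Fin N) ℂ), V = A ⊗ₖ B := by
  obtain ⟨x, y, hxy⟩ := exists_vecMulVec_of_rank_eq_one h
  exact ⟨of (Function.curry x), of (Function.curry y),
    ext fun p q => congr($hxy (p.1, q.1) (p.2, q.2))⟩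

end Realign

theorem unitary_realign_rank_one (M N : ℕ) (hM : 0 < M) (hN : 0 < N)
    (V : Matrix (Fin M × Fin N) (Fin M × Fin N) ℂ)
    (hV : V ∈ Matrix.unitaryGroup (Fin M × Fin N) ℂ) :
    ((realign M N V).rank = 1 ↔
      ∃ (U1 : Matrix (Fin M) (Fin M) ℂ) (U2 : Matrix (Fin N) (Fin N) ℂ) (k : ℝ),
        0 < k ∧ V = U1 ⊗ₖ U2 ∧
        U1 * U1ᴴ = ((k : ℂ)⁻¹) • 1 ∧ U1ᴴ * U1 = ((k : ℂ)⁻¹) • 1 ∧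
        U2 * U2ᴴ = (k : ℂ) • 1 ∧ U2ᴴ * U2 = (k : ℂ) • 1) ∧
    (∀ (W1 : Matrix (Fin M) (Fin M) ℂ) (W2 : Matrix (Fin N) (Fin N) ℂ),
        W1 ∈ Matrix.unitaryGroup (Fin M) ℂ → W2 ∈ Matrix.unitaryGroup (Fin N) ℂ →
        V = W1 ⊗ₖ W2 → (realign M N V).rank = 1) := by
  have : Nonempty (Fin M) := ⟨⟨0, hM⟩⟩
  have : Nonempty (Fin N) := ⟨⟨0, hN⟩⟩
  refine ⟨⟨fun h => ?_, ?_⟩, ?_⟩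
  · obtain ⟨U1, U2, rfl⟩ := exists_kronecker_of_rank_realign_eq_one h
    obtain ⟨k, hk, hU⟩ := exists_pos_of_kronecker_mem_unitaryGroup hV
    exact ⟨U1, U2, k, hk, rfl, hU⟩
  · rintro ⟨U1, U2, k, hk, rfl, hU1, -, hU2, -⟩
    have hk' : (k : ℂ) ≠ 0 := by exact_mod_cast hk.ne'
    exact rank_realign_kronecker (ne_zero_of_mul_eq_smul_one (inv_ne_zero hk') hU1)
      (ne_zero_of_mul_eq_smul_one hk' hU2)
  · rintro W1 W2 hW1 hW2 rfl
    exact rank_realign_kronecker (ne_zero_of_mem_unitaryGroup hW1)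
      (ne_zero_of_mem_unitaryGroup hW2)
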